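/- If m > 0, δ > 0, 4(ap - m) - δ > 0, and the cubic discriminant Δ_δ(a,p,m) of m·h(x) - f(x) is negative (so the cubic has exactly one real root), then m·h(x) - f(x) < 0 for all x ≤ -1 and m·h(x) - f(x) > 0 for all x ≥ 1; in particular the nullclines have no intersection on either attracting branch |x| ≥ 1. -/
import Mathlib

private lemma disc_nonneg_aux (m p r s : ℝ)
    (C0 D0 : ℝ)
    (hC : C0 = m*r*s + (p - m*(r+s))*(r+s))
    (hD : D0 = -(r*s*(p - m*(r+s)))) :
    0 ≤ p ^ 2 * C0 ^ 2 - 4 * m * C0 ^ 3 + 4 * p ^ 3 * D0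
      - 18 * m * p * C0 * D0 - 27 * m ^ 2 * D0 ^ 2 := by
  subst hC hD
  have : p ^ 2 * (m*r*s + (p - m*(r+s))*(r+s)) ^ 2
      - 4 * m * (m*r*s + (p - m*(r+s))*(r+s)) ^ 3
      + 4 * p ^ 3 * (-(r*s*(p - m*(r+s))))
      - 18 * m * p * (m*r*s + (p - m*(r+s))*(r+s)) * (-(r*s*(p - m*(r+s))))
      - 27 * m ^ 2 * (-(r*s*(p - m*(r+s)))) ^ 2
      = (r - s)^2 * (m*r - (p - m*(r+s)))^2 * (m*s - (p - m*(r+s)))^2 := by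
    ring
  rw [this]
  positivity

/-- If `m > 0`, `δ > 0`, `4(ap - m) - δ > 0`, and the cubic discriminant
`Δ_δ(a,p,m)` of `m·h(x) - f(x)` is negative, then `m·h(x) - f(x) < 0` for all
`x ≤ -1` and `m·h(x) - f(x) > 0` for all `x ≥ 1`: the nullclines have no
intersection on either attracting branch. -/
theorem no_intersection_on_branches (p a b k m δ : ℝ) (hm : 0 < m)
    (h f : ℝ → ℝ)
    (hh : ∀ x, h x = x ^ 3 - 3 * x + k)
    (hf : ∀ x, f x = p * (x - a) ^ 2 - b)
    (hδ : δ = p * (a + 1) ^ 2 - b - m * (k + 2))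
    (hδpos : 0 < δ) (hcond : 0 < 4 * (a * p - m) - δ)
    (hdisc : p ^ 2 * (-3 * m + 2 * a * p) ^ 2
        - 4 * m * (-3 * m + 2 * a * p) ^ 3
        + 4 * p ^ 3 * (-δ - 2 * m + p + 2 * a * p)
        - 18 * m * p * (-3 * m + 2 * a * p) * (-δ - 2 * m + p + 2 * a * p)
        - 27 * m ^ 2 * (-δ - 2 * m + p + 2 * a * p) ^ 2 < 0) :
    (∀ x : ℝ, x ≤ -1 → m * h x - f x < 0) ∧
    (∀ x : ℝ, 1 ≤ x → 0 < m * h x - f x) := by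
  set g : ℝ → ℝ := fun x => m*x^3 - p*x^2 + (2*a*p - 3*m)*x + (m*k - p*a^2 + b) with hg
  have hgeq : ∀ x, m * h x - f x = g x := by
    intro x; rw [hh, hf, hg]; ring
  have hcont : Continuous g := by fun_prop
  have hgm1 : g (-1) = -δ := by rw [hg, hδ]; ring
  have hg1 : g 1 = 4 * (a * p - m) - δ := by rw [hg, hδ]; ring
  have hδD : -δ - 2 * m + p + 2 * a * p = m*k - p*a^2 + b := by rw [hδ]; ring
  rw [hδD] at hdisc
  -- key: two distinct real roots of g give a contradiction
  have key : ∀ r s : ℝ, g r = 0 → g s = 0 → r ≠ s → False := by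
    intro r s hr hs hrs
    have hr' : m*r^3 - p*r^2 + (2*a*p - 3*m)*r + (m*k - p*a^2 + b) = 0 := hr
    have hs' : m*s^3 - p*s^2 + (2*a*p - 3*m)*s + (m*k - p*a^2 + b) = 0 := hs
    have hfac : (r - s) * (m*(r^2 + r*s + s^2) - p*(r+s) + (2*a*p - 3*m)) = 0 := by
      linear_combination hr' - hs'
    have h2 : m*(r^2 + r*s + s^2) - p*(r+s) + (2*a*p - 3*m) = 0 := by
      rcases mul_eq_zero.mp hfac with h0 | h0
      · exact absurd (sub_eq_zero.mp h0) hrs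
      · exact h0
    have hC : (-3 * m + 2 * a * p) = m*r*s + (p - m*(r+s))*(r+s) := by
      linear_combination h2
    have hD : (m*k - p*a^2 + b) = -(r*s*(p - m*(r+s))) := by
      linear_combination hr' - r * h2
    have := disc_nonneg_aux m p r s _ _ hC hD
    linarith
  -- root in (-1, 1)
  have hivt : ∃ s ∈ Set.Icc (-1:ℝ) 1, g s = 0 := by
    have := intermediate_value_Icc (by norm_num : (-1:ℝ) ≤ 1) hcont.continuousOn
    have h0 : (0:ℝ) ∈ Set.Icc (g (-1)) (g 1) := by
      rw [hgm1, hg1]; constructor <;> linarith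
    obtain ⟨s, hs1, hs2⟩ := this h0
    exact ⟨s, hs1, hs2⟩
  obtain ⟨s, hsmem, hs0⟩ := hivt
  constructor
  · intro x hx
    rw [hgeq]
    by_contra hcon
    push_neg at hcon
    -- g x ≥ 0, g (-1) < 0: root r in [x, -1]
    have hxle : x ≤ -1 := hx
    have := intermediate_value_Icc' hxle hcont.continuousOn
    have h0 : (0:ℝ) ∈ Set.Icc (g (-1)) (g x) := by
      rw [hgm1]; exact ⟨by linarith, hcon⟩
    obtain ⟨r, hr1, hr2⟩ := this h0
    have hrne : r ≠ s := by
      intro he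
      have : r ≤ -1 := hr1.2
      have hs1 : g (-1) ≠ 0 := by rw [hgm1]; intro h'; linarith [hδpos, neg_eq_zero.mp h']
      -- s ∈ [-1,1] and r ≤ -1, so r = s implies s = -1
      have : s = -1 := le_antisymm (he ▸ hr1.2) hsmem.1
      rw [← he] at this
      rw [this] at hr2
      exact hs1 hr2
    exact key r s hr2 hs0 hrne
  · intro x hx
    rw [hgeq]
    by_contra hcon
    push_neg at hcon
    have := intermediate_value_Icc' hx hcont.continuousOn
    have h0 : (0:ℝ) ∈ Set.Icc (g x) (g 1) := by
      rw [hg1]; exact ⟨hcon, by linarith⟩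
    obtain ⟨r, hr1, hr2⟩ := this h0
    have hrne : r ≠ s := by
      intro he
      have hs1 : g 1 ≠ 0 := by rw [hg1]; intro h'; linarith
      have : s = 1 := le_antisymm hsmem.2 (he ▸ hr1.1)
      rw [← he] at this
      rw [this] at hr2
      exact hs1 hr2
    exact key r s hr2 hs0 hrne
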